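/- arXiv:1303.2608 — 2 statements merged into one kernel-verified Lean document; each statement's English description precedes it below -/
import Mathlib

section
/- Let p and q be distinct prime numbers with p ≡ 1 (mod 8) and q ≡ 1 (mod 8), and assume that p is a quadratic residue modulo q (equivalently, by quadratic reciprocity, q is a quadratic residue modulo p). Then there exist integers x, y, z satisfying x² − p·y² − q·z² = 0 with gcd(x, y, z) = 1, such that y is even and x ≡ 1 + y (mod 4) (equivalently, x + y·√p ≡ 1 modulo 4·O, where O is the ring of integers of ℚ(√p)). -/
/-!
By Legendre's theorem (a pigeonhole argument modulo `pq`, plus a composition step when the small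
vector found has norm `-pq`) the conic `x² = p y² + q z²` has a primitive integral point. Reducing
modulo 4, such a point has `x` odd and one of `y`, `z` even. If `z` is even, multiplying
`x + z√q` by `(q + 1)/2 - √q`, of norm `((q - 1)/2)²`, and `y` by `(q - 1)/2` gives a point with
`x` odd and `y` even; dividing by the (odd) gcd keeps this, and replacing `x` by `-x` if
necessary gives `x ≡ 1 + y (mod 4)`.
-/

lemma sq_ne_of_squarefree {s : ℤ} (hs : Squarefree s) (hs1 : s ≠ 1) (x : ℤ) : x ^ 2 ≠ s := by
  rintro rfl
  rcases Int.isUnit_iff.mp (hs x ⟨1, by ring⟩) with rfl | rfl <;> simp at hs1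

lemma sq_natCast_sub_natCast_le_of_le_sqrt {i j n : ℕ} (hi : i ≤ n.sqrt) (hj : j ≤ n.sqrt) :
    ((i : ℤ) - j) ^ 2 ≤ n :=
  calc ((i : ℤ) - j) ^ 2 ≤ (n.sqrt : ℤ) ^ 2 := sq_le_sq' (by omega) (by omega)
    _ ≤ n := by exact_mod_cast Nat.sqrt_le' n

/-- A pigeonhole argument on the box `[0, √(mn)] × [0, √m] × [0, √n]`, which has more than `mn`
points. -/
lemma exists_ne_zero_sq_le_intCast_eq_mul (m n : ℕ) [NeZero m] [NeZero n] (a : ZMod m)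
    (b : ZMod n) :
    ∃ x y z : ℤ, (x, y, z) ≠ 0 ∧ x ^ 2 ≤ m * n ∧ y ^ 2 ≤ m ∧ z ^ 2 ≤ n ∧
      (x : ZMod m) = a * y ∧ (x : ZMod n) = b * z := by
  let f : Fin ((m * n).sqrt + 1) × Fin (m.sqrt + 1) × Fin (n.sqrt + 1) → ZMod m × ZMod n :=
    fun v => ((v.1 : ℕ) - a * (v.2.1 : ℕ), (v.1 : ℕ) - b * (v.2.2 : ℕ))
  have hcard : Fintype.card (ZMod m × ZMod n) < Fintype.card
      (Fin ((m * n).sqrt + 1) × Fin (m.sqrt + 1) × Fin (n.sqrt + 1)) := by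
    simp only [Fintype.card_prod, ZMod.card, Fintype.card_fin]
    refine lt_of_pow_lt_pow_left₀ 2 (by positivity) ?_
    calc (m * n) ^ 2 = (m * n) * (m * n) := by ring
      _ < ((m * n).sqrt + 1) ^ 2 * ((m.sqrt + 1) ^ 2 * (n.sqrt + 1) ^ 2) := by
        gcongr <;> exact Nat.lt_succ_sqrt' _
      _ = _ := by ring
  obtain ⟨v, w, hvw, hf⟩ := Fintype.exists_ne_map_eq_of_card_lt f hcard
  obtain ⟨hfm, hfn⟩ := Prod.ext_iff.mp hf
  refine ⟨(v.1 : ℕ) - (w.1 : ℕ), (v.2.1 : ℕ) - (w.2.1 : ℕ), (v.2.2 : ℕ) - (w.2.2 : ℕ), ?_,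
    sq_natCast_sub_natCast_le_of_le_sqrt (Fin.is_le _) (Fin.is_le _),
    sq_natCast_sub_natCast_le_of_le_sqrt (Fin.is_le _) (Fin.is_le _),
    sq_natCast_sub_natCast_le_of_le_sqrt (Fin.is_le _) (Fin.is_le _), ?_, ?_⟩
  · contrapose! hvw
    simp only [Prod.mk_eq_zero, sub_eq_zero, Nat.cast_inj, ← Fin.ext_iff] at hvw
    exact Prod.ext hvw.1 (Prod.ext hvw.2.1 hvw.2.2)
  · push_cast
    linear_combination hfm
  · push_cast
    linear_combination hfn

lemma mul_dvd_sq_sub_mul_sq_sub_mul_sq {p q : ℕ} (hpq : p.Coprime q) {a : ZMod q} {b : ZMod p}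
    (ha : (p : ZMod q) = a * a) (hb : (q : ZMod p) = b * b) {x y z : ℤ}
    (hxy : (x : ZMod q) = a * y) (hxz : (x : ZMod p) = b * z) :
    (p * q : ℤ) ∣ x ^ 2 - p * y ^ 2 - q * z ^ 2 := by
  have hq : (q : ℤ) ∣ x ^ 2 - p * y ^ 2 - q * z ^ 2 := by
    rw [← ZMod.intCast_zmod_eq_zero_iff_dvd]
    push_cast
    rw [ZMod.natCast_self, hxy, ha]
    ring
  have hp : (p : ℤ) ∣ x ^ 2 - p * y ^ 2 - q * z ^ 2 := by
    rw [← ZMod.intCast_zmod_eq_zero_iff_dvd]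
    push_cast
    rw [ZMod.natCast_self, hxz, hb]
    ring
  exact (Nat.isCoprime_iff_coprime.mpr hpq).mul_dvd hp hq

theorem exists_ne_zero_sq_sub_mul_sq_sub_mul_sq_eq_zero {p q : ℕ} (hp : p.Prime) (hq : q.Prime)
    (hpq : p ≠ q) (hpq_sq : IsSquare (p : ZMod q)) (hqp_sq : IsSquare (q : ZMod p)) :
    ∃ x y z : ℤ, (x, y, z) ≠ 0 ∧ x ^ 2 - p * y ^ 2 - q * z ^ 2 = 0 := by
  have : NeZero p := ⟨hp.ne_zero⟩
  have : NeZero q := ⟨hq.ne_zero⟩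
  obtain ⟨a, ha⟩ := hpq_sq
  obtain ⟨b, hb⟩ := hqp_sq
  obtain ⟨x, y, z, hne, hx, hy, hz, hxy, hxz⟩ := exists_ne_zero_sq_le_intCast_eq_mul q p a b
  obtain ⟨k, hk⟩ :=
    mul_dvd_sq_sub_mul_sq_sub_mul_sq ((Nat.coprime_primes hp hq).mpr hpq) ha hb hxy hxz
  have hsq (n : ℕ) (hn : Squarefree n) (hn1 : n ≠ 1) (w : ℤ) : w ^ 2 ≠ n :=
    sq_ne_of_squarefree (Int.squarefree_natCast.mpr hn) (by exact_mod_cast hn1) w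
  have hx' : x ^ 2 < p * q := by
    refine lt_of_le_of_ne (by linarith) ?_
    exact_mod_cast hsq (p * q) ((Nat.squarefree_mul ((Nat.coprime_primes hp hq).mpr hpq)).mpr
      ⟨hp.prime.squarefree, hq.prime.squarefree⟩) (by nlinarith [hp.two_le, hq.two_le]) x
  have hy' : y ^ 2 < q := lt_of_le_of_ne hy (hsq q hq.prime.squarefree hq.ne_one y)
  have hz' : z ^ 2 < p := lt_of_le_of_ne hz (hsq p hp.prime.squarefree hp.ne_one z)
  have hpq_pos : (0 : ℤ) < p * q := mul_pos (mod_cast hp.pos) (mod_cast hq.pos)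
  have hk_lt : k < 1 := by nlinarith
  have hk_gt : -2 < k := by nlinarith
  obtain rfl | rfl : k = 0 ∨ k = -1 := by omega
  · exact ⟨x, y, z, hne, by simpa using hk⟩
  -- Multiply `x + y√p`, of norm `q (z² - p)`, by `z - √p`.
  refine ⟨x * z - p * y, y * z - x, z ^ 2 - p, ?_, by linear_combination (z ^ 2 - p) * hk⟩
  simp only [ne_eq, Prod.mk_eq_zero, sub_eq_zero, not_and]
  exact fun _ _ => hsq p hp.prime.squarefree hp.ne_one z

lemma exists_eq_mul_gcd_gcd_eq_one {x y z : ℤ} (h : (x, y, z) ≠ 0) :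
    ∃ g x' y' z' : ℤ, g ≠ 0 ∧ x = g * x' ∧ y = g * y' ∧ z = g * z' ∧
      Int.gcd x' (Int.gcd y' z') = 1 := by
  set g := Int.gcd x (Int.gcd y z) with hg_def
  have hg : g ≠ 0 := by simpa [g, Int.gcd_eq_zero_iff] using h
  have hgyz : (g : ℤ) ∣ Int.gcd y z := Int.gcd_dvd_right _ _
  have hgy : (g : ℤ) ∣ y := hgyz.trans (Int.gcd_dvd_left _ _)
  have hgz : (g : ℤ) ∣ z := hgyz.trans (Int.gcd_dvd_right _ _)
  refine ⟨g, x / g, y / g, z / g, by exact_mod_cast hg,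
    (Int.mul_ediv_cancel' (Int.gcd_dvd_left _ _)).symm, (Int.mul_ediv_cancel' hgy).symm,
    (Int.mul_ediv_cancel' hgz).symm, ?_⟩
  rw [Int.gcd_ediv hgy hgz, Int.natAbs_natCast, Int.natCast_div,
    Int.gcd_ediv (Int.gcd_dvd_left _ _) hgyz, ← hg_def, Int.natAbs_natCast,
    Nat.div_self (Nat.pos_of_ne_zero hg)]

lemma sq_sub_mul_sq_sub_mul_sq_eq_zero_of_mul {a b g x y z : ℤ} (hg : g ≠ 0)
    (h : (g * x) ^ 2 - a * (g * y) ^ 2 - b * (g * z) ^ 2 = 0) :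
    x ^ 2 - a * y ^ 2 - b * z ^ 2 = 0 := by
  have : g ^ 2 * (x ^ 2 - a * y ^ 2 - b * z ^ 2) = 0 := by linear_combination h
  exact (mul_eq_zero.mp this).resolve_left (pow_ne_zero 2 hg)

lemma exists_gcd_gcd_eq_one_of_ne_zero {a b x y z : ℤ} (h : x ^ 2 - a * y ^ 2 - b * z ^ 2 = 0)
    (hne : (x, y, z) ≠ 0) :
    ∃ x y z : ℤ, x ^ 2 - a * y ^ 2 - b * z ^ 2 = 0 ∧ Int.gcd x (Int.gcd y z) = 1 := by
  obtain ⟨g, x, y, z, hg, rfl, rfl, rfl, hgcd⟩ := exists_eq_mul_gcd_gcd_eq_one hne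
  exact ⟨x, y, z, sq_sub_mul_sq_sub_mul_sq_eq_zero_of_mul hg h, hgcd⟩

lemma exists_gcd_gcd_eq_one_of_odd_of_even {a b x y z : ℤ}
    (h : x ^ 2 - a * y ^ 2 - b * z ^ 2 = 0) (hx : Odd x) (hy : Even y) :
    ∃ x y z : ℤ, x ^ 2 - a * y ^ 2 - b * z ^ 2 = 0 ∧ Int.gcd x (Int.gcd y z) = 1 ∧
      Odd x ∧ Even y := by
  have hne : (x, y, z) ≠ 0 := by
    rintro ⟨⟩
    simp at hx
  obtain ⟨g, x, y, z, hg, rfl, rfl, rfl, hgcd⟩ := exists_eq_mul_gcd_gcd_eq_one hne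
  obtain ⟨hg_odd, hx⟩ := Int.odd_mul.mp hx
  refine ⟨x, y, z, sq_sub_mul_sq_sub_mul_sq_eq_zero_of_mul hg h, hgcd, hx, ?_⟩
  exact (Int.even_mul.mp hy).resolve_left (Int.not_even_iff_odd.mpr hg_odd)

lemma sq_emod_four_of_even {x : ℤ} (hx : Even x) : x ^ 2 % 4 = 0 := by
  obtain ⟨k, rfl⟩ := hx
  have : (k + k) ^ 2 = 4 * k ^ 2 := by ring
  omega

lemma odd_and_even_or_even_of_gcd_gcd_eq_one {a b x y z : ℤ} (ha : a % 4 = 1) (hb : b % 4 = 1)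
    (h : x ^ 2 - a * y ^ 2 - b * z ^ 2 = 0) (hgcd : Int.gcd x (Int.gcd y z) = 1) :
    Odd x ∧ (Even y ∨ Even z) := by
  obtain ⟨k, rfl⟩ : ∃ k, a = 4 * k + 1 := ⟨a / 4, by omega⟩
  obtain ⟨l, rfl⟩ : ∃ l, b = 4 * l + 1 := ⟨b / 4, by omega⟩
  have h4 : (4 : ℤ) ∣ x ^ 2 - y ^ 2 - z ^ 2 := ⟨k * y ^ 2 + l * z ^ 2, by linear_combination h⟩
  have hne : ¬ (Even x ∧ Even y ∧ Even z) := by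
    rintro ⟨hx, hy, hz⟩
    have := Int.dvd_coe_gcd (even_iff_two_dvd.mp hx)
      (Int.dvd_coe_gcd (even_iff_two_dvd.mp hy) (even_iff_two_dvd.mp hz))
    rw [hgcd] at this
    norm_num at this
  have hsq (w : ℤ) : Even w ∧ w ^ 2 % 4 = 0 ∨ Odd w ∧ w ^ 2 % 4 = 1 :=
    (Int.even_or_odd w).imp (fun hw => ⟨hw, sq_emod_four_of_even hw⟩)
      (fun hw => ⟨hw, Int.sq_mod_four_eq_one_of_odd hw⟩)
  rcases hsq x with ⟨hx, hx4⟩ | ⟨hx, hx4⟩ <;> rcases hsq y with ⟨hy, hy4⟩ | ⟨hy, hy4⟩ <;>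
    rcases hsq z with ⟨hz, hz4⟩ | ⟨hz, hz4⟩
  all_goals first | omega | tauto

lemma exists_odd_even_of_odd_of_even {a b x y z : ℤ} (hb : b % 4 = 1)
    (h : x ^ 2 - a * y ^ 2 - b * z ^ 2 = 0) (hx : Odd x) (hz : Even z) :
    ∃ x y z : ℤ, x ^ 2 - a * y ^ 2 - b * z ^ 2 = 0 ∧ Odd x ∧ Even y := by
  obtain ⟨k, rfl⟩ : ∃ k, b = 4 * k + 1 := ⟨b / 4, by omega⟩
  -- Multiply `x + z√b` by `2k + 1 - √b`, of norm `(2k)²`, and `y` by `2k`.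
  refine ⟨(2 * k + 1) * x - (4 * k + 1) * z, 2 * k * y, (2 * k + 1) * z - x,
    by linear_combination 4 * k ^ 2 * h, ?_, ⟨k * y, by ring⟩⟩
  exact (Odd.mul ⟨k, rfl⟩ hx).sub_even (hz.mul_left _)

lemma exists_odd_even_of_gcd_gcd_eq_one {a b x y z : ℤ} (ha : a % 4 = 1) (hb : b % 4 = 1)
    (h : x ^ 2 - a * y ^ 2 - b * z ^ 2 = 0) (hgcd : Int.gcd x (Int.gcd y z) = 1) :
    ∃ x y z : ℤ, x ^ 2 - a * y ^ 2 - b * z ^ 2 = 0 ∧ Odd x ∧ Even y := by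
  obtain ⟨hx, hy | hz⟩ := odd_and_even_or_even_of_gcd_gcd_eq_one ha hb h hgcd
  · exact ⟨x, y, z, h, hx, hy⟩
  · exact exists_odd_even_of_odd_of_even hb h hx hz

lemma exists_modEq_one_add_of_odd_of_even {a b x y z : ℤ}
    (h : x ^ 2 - a * y ^ 2 - b * z ^ 2 = 0) (hgcd : Int.gcd x (Int.gcd y z) = 1)
    (hx : Odd x) (hy : Even y) :
    ∃ x y z : ℤ, x ^ 2 - a * y ^ 2 - b * z ^ 2 = 0 ∧ Int.gcd x (Int.gcd y z) = 1 ∧ Even y ∧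
      x ≡ 1 + y [ZMOD 4] := by
  obtain ⟨i, rfl⟩ := hx
  obtain ⟨j, rfl⟩ := hy
  by_cases hc : 2 * i + 1 ≡ 1 + (j + j) [ZMOD 4]
  · exact ⟨_, _, z, h, hgcd, ⟨j, rfl⟩, hc⟩
  · refine ⟨-(2 * i + 1), _, z, by linear_combination h, by rwa [Int.neg_gcd], ⟨j, rfl⟩, ?_⟩
    simp only [Int.ModEq] at hc ⊢
    omega

/-- Existence part of Proposition 4.2 (normproposition): for distinct primes
`p ≡ q ≡ 1 (mod 8)` with `p` a quadratic residue mod `q`, there are integers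
`x, y, z` with `x² - p y² - q z² = 0`, `gcd(x,y,z) = 1`, `y` even and
`x ≡ 1 + y (mod 4)`. -/
theorem redei_norm_equation_two_primes
    (p q : ℕ) (hp : p.Prime) (hq : q.Prime) (hpq : p ≠ q)
    (hp8 : p % 8 = 1) (hq8 : q % 8 = 1)
    (hres : IsSquare ((p : ZMod q))) :
    ∃ x y z : ℤ,
      x ^ 2 - (p : ℤ) * y ^ 2 - (q : ℤ) * z ^ 2 = 0 ∧
      Int.gcd x (Int.gcd y z) = 1 ∧
      Even y ∧
      x ≡ 1 + y [ZMOD 4] := by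
  have : Fact p.Prime := ⟨hp⟩
  have : Fact q.Prime := ⟨hq⟩
  have hqp : IsSquare (q : ZMod p) :=
    (ZMod.exists_sq_eq_prime_iff_of_mod_four_eq_one (by omega) (by omega)).mpr hres
  obtain ⟨x, y, z, hne, h⟩ := exists_ne_zero_sq_sub_mul_sq_sub_mul_sq_eq_zero hp hq hpq hres hqp
  obtain ⟨x, y, z, h, hgcd⟩ := exists_gcd_gcd_eq_one_of_ne_zero h hne
  obtain ⟨x, y, z, h, hx, hy⟩ := exists_odd_even_of_gcd_gcd_eq_one (by omega) (by omega) h hgcd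
  obtain ⟨x, y, z, h, hgcd, hx, hy⟩ := exists_gcd_gcd_eq_one_of_odd_of_even h hx hy
  exact exists_modEq_one_add_of_odd_of_even h hgcd hx hy
end

section
/- Let p be a prime number with p ≡ 1 (mod 8). Then there exist integers x, y, z, not all zero, satisfying x² − p·y² − 2·z² = 0 with gcd(x, y, z) = 1. -/
lemma two_nonsquare : ∀ n : ℤ, (2:ℤ) ≠ n * n := by
  intro n h
  have h1 : n ≤ 1 := by nlinarith [sq_nonneg (n - 1)]
  have h2 : -1 ≤ n := by nlinarith [sq_nonneg (n + 1)]
  interval_cases n <;> omega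

lemma sq_eq_two_mul_sq {u v : ℤ} (h : u ^ 2 - 2 * v ^ 2 = 0) : u = 0 ∧ v = 0 := by
  have hn : Zsqrtd.norm (⟨u, v⟩ : ℤ√2) = 0 := by
    rw [Zsqrtd.norm_def]; ring_nf; ring_nf at h; linarith
  have := (Zsqrtd.norm_eq_zero two_nonsquare ⟨u, v⟩).mp hn
  exact ⟨congrArg Zsqrtd.re this, congrArg Zsqrtd.im this⟩

lemma balanced (M x : ℤ) (hM : 0 < M) : ∃ u : ℤ, M ∣ x - u ∧ 2 * |u| ≤ M := by
  have hd := Int.mul_ediv_add_emod x M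
  have h0 : 0 ≤ x % M := Int.emod_nonneg x hM.ne'
  have h1 : x % M < M := Int.emod_lt_of_pos x hM
  by_cases h : 2 * (x % M) ≤ M
  · exact ⟨x % M, ⟨x / M, by linarith⟩, by rwa [abs_of_nonneg h0]⟩
  · refine ⟨x % M - M, ⟨x / M + 1, by linarith⟩, ?_⟩
    rw [abs_of_nonpos (by linarith)]; omega

lemma descent (p : ℕ) (hp : p.Prime) :
    ∀ m : ℕ, 0 < m → m < p →
    (∃ x y : ℤ, x ^ 2 - 2 * y ^ 2 = m * p ∨ x ^ 2 - 2 * y ^ 2 = -(m * p)) →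
    ∃ x y : ℤ, x ^ 2 - 2 * y ^ 2 = p := by
  intro m
  induction m using Nat.strong_induction_on with
  | _ m ih =>
  intro hm0 hmp hexists
  obtain ⟨x, y, hxy⟩ := hexists
  by_cases hm1 : m = 1
  · subst hm1
    rcases hxy with h | h
    · exact ⟨x, y, by push_cast at h ⊢; linarith⟩
    · exact ⟨x + 2 * y, x + y, by push_cast at h ⊢; nlinarith⟩
  have hM : 0 < (m : ℤ) := by exact_mod_cast hm0
  obtain ⟨u, hdu, hub⟩ := balanced (m : ℤ) x hM
  obtain ⟨v, hdv, hvb⟩ := balanced (m : ℤ) y hM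
  obtain ⟨a, ha⟩ := hdu
  obtain ⟨b, hb⟩ := hdv
  have hu2 : 4 * u ^ 2 ≤ (m : ℤ) ^ 2 := by
    have := abs_nonneg u
    nlinarith [sq_abs u]
  have hv2 : 4 * v ^ 2 ≤ (m : ℤ) ^ 2 := by
    have := abs_nonneg v
    nlinarith [sq_abs v]
  have hE : (m : ℤ) ∣ x ^ 2 - 2 * y ^ 2 := by
    rcases hxy with h | h <;> rw [h]
    · exact ⟨(p : ℤ), by push_cast; ring⟩
    · exact ⟨-(p : ℤ), by push_cast; ring⟩
  have hN : (m : ℤ) ∣ u ^ 2 - 2 * v ^ 2 := by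
    have h2 : (m : ℤ) ∣ (u ^ 2 - 2 * v ^ 2) - (x ^ 2 - 2 * y ^ 2) :=
      ⟨-((a) * (x + u)) + 2 * (b * (y + v)), by
        linear_combination (-(x + u)) * ha + (2 * (y + v)) * hb⟩
    have h5 := dvd_add h2 hE
    rwa [sub_add_cancel] at h5
  obtain ⟨c, hc⟩ := hN
  by_cases hc0 : c = 0
  · -- u = v = 0, so m ∣ x, m ∣ y, leads to m ∣ p, contradiction
    rw [hc0, mul_zero] at hc
    obtain ⟨hu0, hv0⟩ := sq_eq_two_mul_sq hc
    rw [hu0, sub_zero] at ha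
    rw [hv0, sub_zero] at hb
    exfalso
    have hX2 : (m:ℤ) * ((m:ℤ) * (a ^ 2 - 2 * b ^ 2)) = x ^ 2 - 2 * y ^ 2 := by
      rw [ha, hb]; ring
    have hdvd : (m : ℤ) ∣ (p : ℤ) := by
      rcases hxy with h | h
      · refine ⟨a ^ 2 - 2 * b ^ 2, ?_⟩
        have h6 : (m:ℤ) * ((m:ℤ) * (a ^ 2 - 2 * b ^ 2)) = (m:ℤ) * (p : ℤ) := by
          rw [hX2, h]
        exact (mul_left_cancel₀ hM.ne' h6).symm
      · refine ⟨-(a ^ 2 - 2 * b ^ 2), ?_⟩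
        have h6 : (m:ℤ) * ((m:ℤ) * -(a ^ 2 - 2 * b ^ 2)) = (m:ℤ) * (p : ℤ) := by
          have h7 : (m:ℤ) * ((m:ℤ) * -(a ^ 2 - 2 * b ^ 2))
              = -((m:ℤ) * ((m:ℤ) * (a ^ 2 - 2 * b ^ 2))) := by ring
          rw [h7, hX2, h]; ring
        exact (mul_left_cancel₀ hM.ne' h6).symm
    have hd : m ∣ p := Int.ofNat_dvd.mp hdvd
    rcases hp.eq_one_or_self_of_dvd m hd with h | h
    · exact hm1 h
    · omega
  -- descent step
  have h1 : c < (m : ℤ) := by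
    have hNlt : (m:ℤ) * c < (m:ℤ) * (m:ℤ) := by nlinarith [hc, hu2, hv2]
    exact lt_of_mul_lt_mul_left hNlt hM.le
  have h2 : -(m:ℤ) < c := by
    have hNgt : (m:ℤ) * (-(m:ℤ)) < (m:ℤ) * c := by nlinarith [hc, hu2, hv2]
    exact lt_of_mul_lt_mul_left hNgt hM.le
  have hcM : c.natAbs < m := by omega
  have hX : (m : ℤ) ∣ x * u - 2 * y * v := by
    have h3 : (m : ℤ) ∣ (x * u - 2 * y * v) - (x ^ 2 - 2 * y ^ 2) :=
      ⟨-(x * a) + 2 * (y * b), by linear_combination (-x) * ha + (2 * y) * hb⟩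
    have h5 := dvd_add h3 hE
    rwa [sub_add_cancel] at h5
  have hY : (m : ℤ) ∣ x * v - y * u :=
    ⟨y * a - x * b, by linear_combination (-x) * hb + y * ha⟩
  obtain ⟨X, hXe⟩ := hX
  obtain ⟨Y, hYe⟩ := hY
  have hne : ∃ X Y : ℤ, X ^ 2 - 2 * Y ^ 2 = (c.natAbs : ℤ) * p ∨
      X ^ 2 - 2 * Y ^ 2 = -((c.natAbs : ℤ) * p) := by
    have hid : ((m:ℤ) * X) ^ 2 - 2 * ((m:ℤ) * Y) ^ 2
        = (x ^ 2 - 2 * y ^ 2) * ((m:ℤ) * c) := by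
      rw [← hXe, ← hYe, ← hc]; ring
    have hMM : ((m:ℤ)) ^ 2 ≠ 0 := pow_ne_zero _ hM.ne'
    refine ⟨X, Y, ?_⟩
    rcases hxy with h | h <;> rw [h] at hid
    · have hq : X ^ 2 - 2 * Y ^ 2 = (p : ℤ) * c := by
        refine mul_left_cancel₀ hMM ?_
        push_cast at hid ⊢; linear_combination hid
      rcases Int.natAbs_eq c with hs | hs
      · left; rw [hq, hs]; push_cast [abs_neg, abs_abs]; ring
      · right; rw [hq, hs]; push_cast [abs_neg, abs_abs]; ring
    · have hq : X ^ 2 - 2 * Y ^ 2 = -((p : ℤ) * c) := by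
        refine mul_left_cancel₀ hMM ?_
        push_cast at hid ⊢; linear_combination hid
      rcases Int.natAbs_eq c with hs | hs
      · right; rw [hq, hs]; push_cast [abs_neg, abs_abs]; ring
      · left; rw [hq, hs]; push_cast [abs_neg, abs_abs]; ring
  have hc0' : 0 < c.natAbs := Int.natAbs_pos.mpr hc0
  exact ih c.natAbs hcM hc0' (lt_trans hcM hmp) hne

/-- Existence part of Proposition 4.2 (normproposition) in the case where one of
the primes is `2`: for a prime `p ≡ 1 (mod 8)` there are integers `x, y, z`,
not all zero, with `x² - p y² - 2 z² = 0` and `gcd(x,y,z) = 1`. -/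
theorem redei_norm_equation_with_two
    (p : ℕ) (hp : p.Prime) (hp8 : p % 8 = 1) :
    ∃ x y z : ℤ,
      ¬(x = 0 ∧ y = 0 ∧ z = 0) ∧
      x ^ 2 - (p : ℤ) * y ^ 2 - 2 * z ^ 2 = 0 ∧
      Int.gcd x (Int.gcd y z) = 1 := by
  haveI : Fact p.Prime := ⟨hp⟩
  have hp2 : p ≠ 2 := by intro h; subst h; norm_num at hp8
  obtain ⟨A, hA⟩ := (ZMod.exists_sq_eq_two_iff hp2).mpr (Or.inl hp8)
  -- b = A.val as an integer satisfies b^2 ≡ 2 mod p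
  set b : ℤ := (A.val : ℤ) with hbdef
  have hple : 2 < p := lt_of_le_of_ne hp.two_le (Ne.symm hp2)
  have hbp : b < p := by rw [hbdef]; exact_mod_cast ZMod.val_lt A
  have hb0 : 0 ≤ b := Int.natCast_nonneg _
  have hdvd : (p : ℤ) ∣ b ^ 2 - 2 := by
    rw [← ZMod.intCast_zmod_eq_zero_iff_dvd]
    push_cast
    rw [hbdef]
    push_cast
    simp only [ZMod.natCast_val, ZMod.intCast_cast, ZMod.cast_id]
    rw [sq, ← hA, sub_self]
  obtain ⟨t, ht⟩ := hdvd
  have hb2 : b ^ 2 ≠ 2 := by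
    intro h
    exact two_nonsquare b (by rw [← h]; ring)
  have ht0 : t ≠ 0 := by
    intro h
    rw [h, mul_zero, sub_eq_zero] at ht
    exact hb2 ht
  have htpos : 0 < t := by
    rcases lt_trichotomy t 0 with h | h | h
    · exfalso
      have : (p : ℤ) * t ≤ -(p : ℤ) := by
        have h1 : t ≤ -1 := by omega
        nlinarith [Int.natCast_pos.mpr hp.pos]
      nlinarith [sq_nonneg b, Int.natCast_pos.mpr hp.pos]
    · exact absurd h ht0
    · exact h
  have htlt : t < p := by
    by_contra h
    push_neg at h
    have : (p : ℤ) * (p : ℤ) ≤ (p : ℤ) * t := by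
      nlinarith [Int.natCast_pos.mpr hp.pos]
    nlinarith [hbp, hb0]
  have hstart : ∃ x y : ℤ, x ^ 2 - 2 * y ^ 2 = (t.toNat : ℤ) * p ∨
      x ^ 2 - 2 * y ^ 2 = -((t.toNat : ℤ) * p) := by
    refine ⟨b, 1, Or.inl ?_⟩
    rw [Int.toNat_of_nonneg htpos.le]
    linarith [ht]
  obtain ⟨X, Y, hXY⟩ := descent p hp t.toNat (by omega) (by omega) hstart
  refine ⟨X, 1, Y, ?_, ?_, ?_⟩
  · rintro ⟨-, h, -⟩; exact one_ne_zero h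
  · linarith [hXY]
  · simp [Int.gcd]
end
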